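/- (Lemma `lemma.empty.0`) Assume in addition γ₀ ≥ 2γ. Then for every ℓ ∈ ℤ^ν \ {0}, every n ∈ ℕ₀ with ⟨n⟩^α ≥ 4C₀(γ₀M)^{−2}⟨ℓ⟩^{τ₀}, and every ω ∈ Ω₀, one has |ω·ℓ + μ_n(ω) − μ'_n(ω)| ≥ γ·⟨ℓ⟩^{−τ}·M^{−α}. Moreover, if n ∈ ℕ₀ is such that μ_n(ω) = μ'_n(ω) for all ω ∈ R_M (as happens for n = 0, where the block is one-dimensional), then the same lower bound holds for every ℓ ∈ ℤ^ν \ {0} and every ω ∈ Ω₀, with no further condition on n. -/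

import Mathlib

noncomputable section

open MeasureTheory

/-- The closed annulus `R_M = {ω ∈ ℝ^ν : M ≤ |ω| ≤ 2M}`. -/
def RM (ν : ℕ) (M : ℝ) : Set (EuclideanSpace ℝ (Fin ν)) :=
  {ω | M ≤ ‖ω‖ ∧ ‖ω‖ ≤ 2 * M}

/-- Euclidean norm of an integer vector `ℓ ∈ ℤ^ν`. -/
def znorm {ν : ℕ} (ℓ : Fin ν → ℤ) : ℝ := Real.sqrt (∑ i, ((ℓ i : ℝ)) ^ 2)

/-- The inner product `ω·ℓ`. -/
def dotZ {ν : ℕ} (ω : EuclideanSpace ℝ (Fin ν)) (ℓ : Fin ν → ℤ) : ℝ :=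
  ∑ i, ω i * (ℓ i : ℝ)

/-- Japanese bracket of a real number, `⟨x⟩ = max {1, |x|}`. -/
def japR (x : ℝ) : ℝ := max 1 |x|

/-- Japanese bracket of an integer vector, `⟨ℓ⟩ = max {1, |ℓ|}`. -/
def japZv {ν : ℕ} (ℓ : Fin ν → ℤ) : ℝ := max 1 (znorm ℓ)

/-- The Diophantine set `Ω₀ = {ω ∈ R_M : |ω·ℓ| ≥ γ₀ M ⟨ℓ⟩^{−τ₀} ∀ ℓ ≠ 0}`. -/
def dioph (ν : ℕ) (M γ₀ τ₀ : ℝ) : Set (EuclideanSpace ℝ (Fin ν)) :=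
  {ω ∈ RM ν M | ∀ ℓ : Fin ν → ℤ, ℓ ≠ 0 → γ₀ * M * japZv ℓ ^ (-τ₀) ≤ |dotZ ω ℓ|}

/-! Two perturbations of the same `λₙ` differ by at most `2C₀(γ₀M)⁻¹⟨n⟩^{-α}`, and the
threshold on `⟨n⟩^α` makes this at most half of the Diophantine bound `γ₀M⟨ℓ⟩^{-τ₀}`; the other
half survives the perturbation and dominates `γ⟨ℓ⟩^{-τ}M^{-α}` because `2γ ≤ γ₀` and `M ≥ 1`. -/

lemma one_le_japZv {ν : ℕ} (ℓ : Fin ν → ℤ) : 1 ≤ japZv ℓ := le_max_left _ _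

lemma abs_sub_le_two_mul {x y z ε : ℝ} (hx : |x - z| ≤ ε) (hy : |y - z| ≤ ε) :
    |x - y| ≤ 2 * ε := by
  calc |x - y| ≤ |x - z| + |z - y| := abs_sub_le x z y
    _ = |x - z| + |y - z| := by rw [abs_sub_comm z y]
    _ ≤ 2 * ε := by linarith

lemma half_le_abs_add {a x d : ℝ} (hx : a ≤ |x|) (hd : |d| ≤ a / 2) : a / 2 ≤ |x + d| := by
  have := abs_sub (x + d) d
  rw [add_sub_cancel_right] at this
  linarith

lemma two_mul_div_div_le_of_threshold {a A C L τ₀ : ℝ} (ha : 0 < a) (hA : 0 < A) (hL : 0 < L)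
    (h : 4 * C / a ^ 2 * L ^ τ₀ ≤ A) : 2 * (C / a / A) ≤ a / 2 * L ^ (-τ₀) := by
  have hLτ₀ : 0 < L ^ τ₀ := Real.rpow_pos_of_pos hL τ₀
  rw [div_mul_eq_mul_div, div_le_iff₀ (by positivity)] at h
  rw [Real.rpow_neg hL.le, div_div, ← div_eq_mul_inv, mul_div_assoc',
    div_le_div_iff₀ (by positivity) hLτ₀]
  nlinarith

lemma mul_rpow_neg_mul_rpow_neg_le {γ γ₀ M L α τ₀ τ : ℝ} (hγ : 0 ≤ γ) (hγγ₀ : 2 * γ ≤ γ₀)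
    (hM : 1 ≤ M) (hL : 1 ≤ L) (hα : 0 ≤ α) (hτ : τ₀ ≤ τ) :
    γ * L ^ (-τ) * M ^ (-α) ≤ γ₀ * M / 2 * L ^ (-τ₀) := by
  have hLτ : L ^ (-τ) ≤ L ^ (-τ₀) := Real.rpow_le_rpow_of_exponent_le hL (neg_le_neg hτ)
  have hMα : M ^ (-α) ≤ 1 := Real.rpow_le_one_of_one_le_of_nonpos hM (neg_nonpos.mpr hα)
  have hγM : γ ≤ γ₀ * M / 2 := by nlinarith
  calc γ * L ^ (-τ) * M ^ (-α) ≤ γ * L ^ (-τ₀) * 1 := by gcongr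
    _ ≤ γ₀ * M / 2 * L ^ (-τ₀) := by
      rw [mul_one]; exact mul_le_mul_of_nonneg_right hγM (by positivity)

lemma le_abs_dotZ_add {ν : ℕ} {M γ γ₀ α τ₀ τ d : ℝ} {ω : EuclideanSpace ℝ (Fin ν)}
    {ℓ : Fin ν → ℤ} (hω : ω ∈ dioph ν M γ₀ τ₀) (hℓ : ℓ ≠ 0) (hγ : 0 ≤ γ) (hγγ₀ : 2 * γ ≤ γ₀)
    (hM : 1 ≤ M) (hα : 0 ≤ α) (hτ : τ₀ ≤ τ) (hd : |d| ≤ γ₀ * M / 2 * japZv ℓ ^ (-τ₀)) :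
    γ * japZv ℓ ^ (-τ) * M ^ (-α) ≤ |dotZ ω ℓ + d| := by
  refine (mul_rpow_neg_mul_rpow_neg_le hγ hγγ₀ hM (one_le_japZv ℓ) hα hτ).trans ?_
  rw [div_mul_eq_mul_div]
  refine half_le_abs_add (hω.2 ℓ hℓ) ?_
  rwa [← div_mul_eq_mul_div]

theorem lemma_empty_0_general
    (ν : ℕ) (M : ℝ) (hM : 1 ≤ M)
    (α γ γ₀ τ₀ τ : ℝ) (hα : 0 < α) (hγ : 0 < γ)
    (hγ₀ : 0 < γ₀) (hτ : τ₀ ≤ τ)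
    (C₀ : ℝ)
    (lam : ℕ → ℝ)
    (μ μ' : ℕ → EuclideanSpace ℝ (Fin ν) → ℝ)
    (hμ : ∀ n : ℕ, ∀ ω ∈ RM ν M,
      |μ n ω - lam n| ≤ C₀ / (γ₀ * M) / (max 1 (n : ℝ)) ^ α)
    (hμ' : ∀ n : ℕ, ∀ ω ∈ RM ν M,
      |μ' n ω - lam n| ≤ C₀ / (γ₀ * M) / (max 1 (n : ℝ)) ^ α)
    (hγγ₀ : 2 * γ ≤ γ₀) :
    (∀ ℓ : Fin ν → ℤ, ℓ ≠ 0 → ∀ n : ℕ,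
        4 * C₀ / (γ₀ * M) ^ 2 * japZv ℓ ^ τ₀ ≤ (max 1 (n : ℝ)) ^ α →
        ∀ ω ∈ dioph ν M γ₀ τ₀,
          γ * japZv ℓ ^ (-τ) * M ^ (-α) ≤ |dotZ ω ℓ + μ n ω - μ' n ω|) ∧
    (∀ n : ℕ, (∀ ω ∈ RM ν M, μ n ω = μ' n ω) →
        ∀ ℓ : Fin ν → ℤ, ℓ ≠ 0 →
        ∀ ω ∈ dioph ν M γ₀ τ₀,
          γ * japZv ℓ ^ (-τ) * M ^ (-α) ≤ |dotZ ω ℓ + μ n ω - μ' n ω|) := by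
  have hγ₀M : 0 < γ₀ * M := mul_pos hγ₀ (zero_lt_one.trans_le hM)
  refine ⟨fun ℓ hℓ n hn ω hω => ?_, fun n hμμ' ℓ hℓ ω hω => ?_⟩
  · have hd : |μ n ω - μ' n ω| ≤ γ₀ * M / 2 * japZv ℓ ^ (-τ₀) :=
      (abs_sub_le_two_mul (hμ n ω hω.1) (hμ' n ω hω.1)).trans
        (two_mul_div_div_le_of_threshold hγ₀M
          (Real.rpow_pos_of_pos (zero_lt_one.trans_le (le_max_left _ _)) α)
          (zero_lt_one.trans_le (one_le_japZv ℓ)) hn)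
    rw [add_sub_assoc]
    exact le_abs_dotZ_add hω hℓ hγ.le hγγ₀ hM hα.le hτ hd
  · rw [hμμ' ω hω.1, add_sub_cancel_right, ← add_zero (dotZ ω ℓ)]
    refine le_abs_dotZ_add hω hℓ hγ.le hγγ₀ hM hα.le hτ ?_
    rw [abs_zero]
    have := one_le_japZv ℓ
    positivity

/-- **Lemma `lemma.empty.0`.** Under `γ₀ ≥ 2γ`, the diagonal nearly-resonant sets with
`⟨n⟩^α ≥ 4C₀(γ₀M)^{−2}⟨ℓ⟩^{τ₀}` (or with coinciding block eigenvalues) are empty. -/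
theorem lemma_empty_0
    (ν : ℕ) (hν : 1 ≤ ν) (M : ℝ) (hM : 1 ≤ M)
    (α γ γ₀ τ₀ τ : ℝ) (hα : 0 < α) (hα1 : α < 1) (hγ : 0 < γ) (hγ1 : γ < 1)
    (hγ₀ : 0 < γ₀) (hγ₀1 : γ₀ < 1) (hτ₀ : (ν : ℝ) - 1 < τ₀) (hτ : τ₀ ≤ τ)
    (mbar C₀ : ℝ) (hmbar : 0 < mbar) (hC₀ : 0 < C₀)
    (lam : ℕ → ℝ) (hlam : ∀ n : ℕ, |lam n - (n : ℝ)| ≤ mbar / max 1 (n : ℝ))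
    (μ μ' : ℕ → EuclideanSpace ℝ (Fin ν) → ℝ)
    (hμ : ∀ n : ℕ, ∀ ω ∈ RM ν M,
      |μ n ω - lam n| ≤ C₀ / (γ₀ * M) / (max 1 (n : ℝ)) ^ α)
    (hμ' : ∀ n : ℕ, ∀ ω ∈ RM ν M,
      |μ' n ω - lam n| ≤ C₀ / (γ₀ * M) / (max 1 (n : ℝ)) ^ α)
    (hγγ₀ : 2 * γ ≤ γ₀) :
    (∀ ℓ : Fin ν → ℤ, ℓ ≠ 0 → ∀ n : ℕ,
        4 * C₀ / (γ₀ * M) ^ 2 * japZv ℓ ^ τ₀ ≤ (max 1 (n : ℝ)) ^ α →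
        ∀ ω ∈ dioph ν M γ₀ τ₀,
          γ * japZv ℓ ^ (-τ) * M ^ (-α) ≤ |dotZ ω ℓ + μ n ω - μ' n ω|) ∧
    (∀ n : ℕ, (∀ ω ∈ RM ν M, μ n ω = μ' n ω) →
        ∀ ℓ : Fin ν → ℤ, ℓ ≠ 0 →
        ∀ ω ∈ dioph ν M γ₀ τ₀,
          γ * japZv ℓ ^ (-τ) * M ^ (-α) ≤ |dotZ ω ℓ + μ n ω - μ' n ω|) :=
  lemma_empty_0_general ν M hM α γ γ₀ τ₀ τ hα hγ hγ₀ hτ C₀ lam μ μ' hμ hμ' hγγ₀
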